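/- Let V be a finite set, let B ⊆ 2^V be a nonempty Sperner hypergraph, and let h be a pure Horn function on V with h ≤ Φ_B. Then K(h) = B if and only if for every set A ⊆ V with A ∈ B^* and every v ∈ V∖A such that A → v is an implicate of h, one has v ∉ ∪B^{V∖A}. -/

import Mathlib

/-!
Since `h ≤ Φ_𝓑`, every hyperedge is a key, so for Sperner `𝓑` the equality `𝒦(h) = 𝓑` says
exactly that every key of `h` contains a hyperedge.

If so, and `A → v` is an implicate with `v` in a member `(V ∖ A) ∩ B₀` of `𝓑^{V∖A}`, then
`(A ∪ B₀) ∖ {v}` is still a key, hence contains a hyperedge `B₁`, and `(V ∖ A) ∩ B₁` is a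
strictly smaller trace that misses `v`.

Conversely, a key `K` containing no hyperedge is independent; enlarge it to a maximal
independent set `A`. For any `v ∉ A` (one exists as `𝓑 ≠ ∅`), the set `A ∪ {v}` contains a
hyperedge, so `{v} ∈ 𝓑^{V∖A}`, while `K ⊆ A` makes `A → v` an implicate.
-/

open scoped Classical

variable {V : Type*} [Fintype V] [DecidableEq V]

/-- A Sperner hypergraph: no hyperedge contains another one. -/
def SpernerFam (𝓑 : Set (Finset V)) : Prop :=
  ∀ B₁ ∈ 𝓑, ∀ B₂ ∈ 𝓑, B₁ ⊆ B₂ → B₁ = B₂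

/-- `T` is a transversal of `𝓑` if it meets every hyperedge. -/
def IsTransversal (𝓑 : Set (Finset V)) (T : Finset V) : Prop :=
  ∀ B ∈ 𝓑, (T ∩ B).Nonempty

/-- `𝓑^d`: the family of inclusion-minimal transversals of `𝓑`. -/
def dualHyp (𝓑 : Set (Finset V)) : Set (Finset V) :=
  {T | IsTransversal 𝓑 T ∧ ∀ T', IsTransversal 𝓑 T' → T' ⊆ T → T' = T}

/-- `𝓑_S`: the subhypergraph of `𝓑` induced by `S`. -/
def inducedHyp (𝓑 : Set (Finset V)) (S : Finset V) : Set (Finset V) :=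
  {B | B ∈ 𝓑 ∧ B ⊆ S}

/-- `𝓑^S`: the family of inclusion-minimal members of `{S ∩ B : B ∈ 𝓑}`,
the projection of `𝓑` to `S`. -/
def projHyp (𝓑 : Set (Finset V)) (S : Finset V) : Set (Finset V) :=
  {C | (∃ B ∈ 𝓑, C = S ∩ B) ∧ ∀ B ∈ 𝓑, S ∩ B ⊆ C → S ∩ B = C}

/-- A Boolean function `h` on `V` is pure Horn if its set of true assignments contains the
all-true assignment and is closed under componentwise AND. -/
def PureHorn (h : (V → Bool) → Bool) : Prop :=
  h (fun _ => true) = true ∧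
  ∀ x y : V → Bool, h x = true → h y = true → h (fun v => x v && y v) = true

/-- The clause `A → v` is an implicate of `h`: every true assignment of `h` that is true on
every element of `A` is also true at `v`. -/
def Implicate (h : (V → Bool) → Bool) (A : Finset V) (v : V) : Prop :=
  ∀ x : V → Bool, h x = true → (∀ a ∈ A, x a = true) → x v = true

/-- `K` is a key of `h` if `K → v` is an implicate of `h` for every `v ∈ V \ K`. -/
def IsKey (h : (V → Bool) → Bool) (K : Finset V) : Prop :=
  ∀ v ∉ K, Implicate h K v

/-- `𝒦(h)`: the family of inclusion-minimal keys of `h`. -/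
def minKeys (h : (V → Bool) → Bool) : Set (Finset V) :=
  {K | IsKey h K ∧ ∀ K', IsKey h K' → K' ⊆ K → K' = K}

/-- `Φ_𝓑`: the pure Horn function whose true assignments are exactly those `x` such that for
every `B ∈ 𝓑` on which `x` is identically true, `x` is identically true on all of `V`. -/
noncomputable def PhiB (𝓑 : Set (Finset V)) : (V → Bool) → Bool :=
  fun x => decide (∀ B ∈ 𝓑, (∀ u ∈ B, x u = true) → ∀ v : V, x v = true)

/-- `S` is an independent set of `𝓑`: its complement is a transversal. -/
def IndepOf (𝓑 : Set (Finset V)) (S : Finset V) : Prop :=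
  IsTransversal 𝓑 (Finset.univ \ S)

section Keys

variable {𝓑 : Set (Finset V)} {h : (V → Bool) → Bool}

omit [Fintype V] [DecidableEq V] in
theorem Implicate.mono {A A' : Finset V} {v : V} (hi : Implicate h A v) (hAA' : A ⊆ A') :
    Implicate h A' v :=
  fun x hx hxA' => hi x hx fun a ha => hxA' a (hAA' ha)

omit [Fintype V] [DecidableEq V] in
theorem IsKey.mono {K K' : Finset V} (hK : IsKey h K) (hKK' : K ⊆ K') : IsKey h K' :=
  fun v hv => (hK v fun hvK => hv (hKK' hvK)).mono hKK'

omit [Fintype V] in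
theorem IsKey.of_insert {K : Finset V} {v : V} (hi : Implicate h K v)
    (hK : IsKey h (insert v K)) : IsKey h K := by
  intro u hu x hx hxK
  have hxv : x v = true := hi x hx hxK
  by_cases huv : u = v
  · exact huv ▸ hxv
  · refine hK u (by simp [huv, hu]) x hx fun a ha => ?_
    rcases Finset.mem_insert.mp ha with rfl | ha
    exacts [hxv, hxK a ha]

theorem isKey_of_mem (hle : ∀ x : V → Bool, h x = true → PhiB 𝓑 x = true)
    {B : Finset V} (hB : B ∈ 𝓑) : IsKey h B :=
  fun v _ x hx hxB => of_decide_eq_true (hle x hx) B hB hxB v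

theorem minKeys_eq_iff_forall_isKey (hSp : SpernerFam 𝓑)
    (hle : ∀ x : V → Bool, h x = true → PhiB 𝓑 x = true) :
    minKeys h = 𝓑 ↔ ∀ K, IsKey h K → ∃ B ∈ 𝓑, B ⊆ K := by
  constructor
  · rintro rfl K hK
    obtain ⟨K', hK'K, hK'⟩ := Finite.exists_le_minimal (p := IsKey h) hK
    exact ⟨K', ⟨hK'.prop, fun _ hK'' h'' => hK'.eq_of_le hK'' h''⟩, hK'K⟩
  · intro hcontains
    ext K
    refine ⟨fun ⟨hK, hmin⟩ => ?_, fun hK => ⟨isKey_of_mem hle hK, fun K' hK' hK'K => ?_⟩⟩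
    · obtain ⟨B, hB, hBK⟩ := hcontains K hK
      exact hmin B (isKey_of_mem hle hB) hBK ▸ hB
    · obtain ⟨B, hB, hBK'⟩ := hcontains K' hK'
      exact hK'K.antisymm (hSp B hB K hK (hBK'.trans hK'K) ▸ hBK')

end Keys

section Projection

variable {𝓑 : Set (Finset V)}

theorem indepOf_iff_forall_not_subset {A : Finset V} : IndepOf 𝓑 A ↔ ∀ B ∈ 𝓑, ¬B ⊆ A := by
  simp only [IndepOf, IsTransversal, Finset.not_subset, Finset.Nonempty, Finset.mem_inter,
    Finset.mem_sdiff, Finset.mem_univ, true_and]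
  exact forall₂_congr fun _ _ => exists_congr fun _ => and_comm

theorem Implicate.notMem_of_mem_projHyp {h : (V → Bool) → Bool}
    (hle : ∀ x : V → Bool, h x = true → PhiB 𝓑 x = true)
    (hcontains : ∀ K, IsKey h K → ∃ B ∈ 𝓑, B ⊆ K) {A C : Finset V} {v : V}
    (hi : Implicate h A v) (hC : C ∈ projHyp 𝓑 (Finset.univ \ A)) : v ∉ C := by
  obtain ⟨⟨B₀, hB₀, rfl⟩, hmin⟩ := hC
  intro hv
  have hvA : v ∉ A := (Finset.mem_sdiff.mp (Finset.mem_inter.mp hv).1).2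
  have hAK : A ⊆ (A ∪ B₀).erase v := fun a ha =>
    Finset.mem_erase.mpr ⟨fun hav => hvA (hav ▸ ha), Finset.mem_union_left _ ha⟩
  have hkey : IsKey h ((A ∪ B₀).erase v) := by
    refine IsKey.of_insert (hi.mono hAK) ((isKey_of_mem hle hB₀).mono ?_)
    rw [Finset.insert_erase (Finset.mem_union_right _ (Finset.mem_inter.mp hv).2)]
    exact Finset.subset_union_right
  obtain ⟨B₁, hB₁, hB₁K⟩ := hcontains _ hkey
  have htrace : (Finset.univ \ A) ∩ B₁ ⊆ ((Finset.univ \ A) ∩ B₀).erase v := by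
    intro u hu
    obtain ⟨huS, huB₁⟩ := Finset.mem_inter.mp hu
    obtain ⟨huv, huAB₀⟩ := Finset.mem_erase.mp (hB₁K huB₁)
    have huA : u ∉ A := (Finset.mem_sdiff.mp huS).2
    exact Finset.mem_erase.mpr ⟨huv, Finset.mem_inter.mpr ⟨huS, (Finset.mem_union.mp huAB₀).resolve_left huA⟩⟩
  have heq := hmin B₁ hB₁ (htrace.trans (Finset.erase_subset _ _))
  exact Finset.notMem_erase v _ (htrace (heq ▸ hv))

theorem exists_singleton_mem_projHyp_of_maximal (hne : 𝓑.Nonempty) {A : Finset V}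
    (hA : Maximal (IndepOf 𝓑) A) : ∃ v ∉ A, {v} ∈ projHyp 𝓑 (Finset.univ \ A) := by
  obtain ⟨B₀, hB₀⟩ := hne
  obtain ⟨v, -, hvA⟩ := Finset.not_subset.mp (indepOf_iff_forall_not_subset.mp hA.prop B₀ hB₀)
  have hdep : ¬IndepOf 𝓑 (insert v A) := fun hind =>
    hvA (hA.eq_of_le hind (Finset.subset_insert v A) ▸ Finset.mem_insert_self v A)
  obtain ⟨B, hB, hBvA⟩ : ∃ B ∈ 𝓑, B ⊆ insert v A := by
    simpa [indepOf_iff_forall_not_subset] using hdep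
  have htrace_sub : ∀ B' ⊆ insert v A, (Finset.univ \ A) ∩ B' ⊆ {v} := fun B' hB' u hu => by
    obtain ⟨huS, huB'⟩ := Finset.mem_inter.mp hu
    exact Finset.mem_singleton.mpr
      ((Finset.mem_insert.mp (hB' huB')).resolve_right (Finset.mem_sdiff.mp huS).2)
  have htrace_eq : ∀ B' ∈ 𝓑, (Finset.univ \ A) ∩ B' ⊆ {v} → (Finset.univ \ A) ∩ B' = {v} :=
    fun B' hB' hsub => (Finset.subset_singleton_iff.mp hsub).resolve_left
      (hA.prop B' hB').ne_empty
  exact ⟨v, hvA, ⟨B, hB, (htrace_eq B hB (htrace_sub B hBvA)).symm⟩, htrace_eq⟩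

end Projection

theorem stmt3_general (𝓑 : Set (Finset V)) (hne : 𝓑.Nonempty) (hSp : SpernerFam 𝓑)
    (h : (V → Bool) → Bool)
    (hle : ∀ x : V → Bool, h x = true → PhiB 𝓑 x = true) :
    minKeys h = 𝓑 ↔
      ∀ A : Finset V, IndepOf 𝓑 A → ∀ v ∉ A, Implicate h A v →
        v ∉ ⋃ C ∈ projHyp 𝓑 (Finset.univ \ A), (C : Set V) := by
  rw [minKeys_eq_iff_forall_isKey hSp hle]
  refine ⟨fun hcontains A _ v _ hi hv => ?_, fun hcond K hK => ?_⟩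
  · obtain ⟨C, hC, hvC⟩ := Set.mem_iUnion₂.mp hv
    exact hi.notMem_of_mem_projHyp hle hcontains hC hvC
  · by_contra! hK𝓑
    obtain ⟨A, hKA, hA⟩ :=
      Finite.exists_le_maximal (indepOf_iff_forall_not_subset.mpr hK𝓑)
    obtain ⟨v, hvA, hv⟩ := exists_singleton_mem_projHyp_of_maximal hne hA
    have hi : Implicate h A v := (hK v fun hvK => hvA (hKA hvK)).mono hKA
    exact hcond A hA.prop v hvA hi (Set.mem_iUnion₂.mpr ⟨{v}, hv, by simp⟩)

/-- For a nonempty Sperner hypergraph `𝓑` and a pure Horn function `h ≤ Φ_𝓑`: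
`𝒦(h) = 𝓑` iff for every implicate `A → v` of `h` with `A ∈ 𝓑^*` we have
`v ∉ ∪ 𝓑^{V∖A}`. -/
theorem stmt3 (𝓑 : Set (Finset V)) (hne : 𝓑.Nonempty) (hSp : SpernerFam 𝓑)
    (h : (V → Bool) → Bool) (hh : PureHorn h)
    (hle : ∀ x : V → Bool, h x = true → PhiB 𝓑 x = true) :
    minKeys h = 𝓑 ↔
      ∀ A : Finset V, IndepOf 𝓑 A → ∀ v ∉ A, Implicate h A v →
        v ∉ ⋃ C ∈ projHyp 𝓑 (Finset.univ \ A), (C : Set V) :=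
  stmt3_general 𝓑 hne hSp h hle
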